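/- Let A be the SARX companion matrix with h^n ≠ 0, n = n_y + n_u, and let x^T = Σ_{i=n_y+1}^{n} h^i e_i^T = e_1^T A - Σ_{i=1}^{n_y} h^i e_i^T. Then x^T A^j = Σ_{i=1}^{n_u - j} h^{n_y+i+j} e_{n_y+i}^T for j = 0,...,n_u, and the row vectors x^T A^j, j = 0,...,n_u - 1, span X2 = span{e_{n_y+1}^T,...,e_n^T}. -/
import Mathlib


/-- The companion-like matrix of a SISO (S)ARX system of type `(ny, nu)` with coefficient
row `h` (0-based indexing: `h i` corresponds to `h^{i+1}` in the paper):
`A e_j = h^j e_1 + e_{j+1}` for `j ∈ {1,...,n-1} \ {n_y}`, `A e_{n_y} = h^{n_y} e_1`,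
`A e_n = h^n e_1`, where `n = n_y + n_u`. -/
def sarxCompanion (ny nu : ℕ) (h : Fin (ny + nu) → ℝ) :
    Matrix (Fin (ny + nu)) (Fin (ny + nu)) ℝ :=
  Matrix.of fun i k =>
    (if (i : ℕ) = 0 then h k else 0) +
    (if (i : ℕ) = (k : ℕ) + 1 ∧ (k : ℕ) + 1 ≠ ny then 1 else 0)

/-- The subspace `X1 = span{e_1, ..., e_{n_y}}`. -/
def sarxX1 (ny nu : ℕ) : Submodule ℝ (Fin (ny + nu) → ℝ) :=
  Submodule.span ℝ {v : Fin (ny + nu) → ℝ | ∃ i : Fin (ny + nu), (i : ℕ) < ny ∧ v = Pi.single i 1}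

/-- The row vector `xᵀ = Σ_{i=n_y+1}^{n} h^i e_iᵀ` (0-based: support on indices `≥ ny`). -/
def sarxRowX (ny nu : ℕ) (h : Fin (ny + nu) → ℝ) : Fin (ny + nu) → ℝ :=
  fun i => if ny ≤ (i : ℕ) then h i else 0

lemma sarx_step (ny nu : ℕ) (hny : 1 ≤ ny) (h : Fin (ny + nu) → ℝ) (j : ℕ) :
    Matrix.vecMul
      (fun k : Fin (ny + nu) =>
        if hk : ny ≤ (k : ℕ) ∧ (k : ℕ) + j < ny + nu then h ⟨(k : ℕ) + j, hk.2⟩ else 0)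
      (sarxCompanion ny nu h) =
    (fun k : Fin (ny + nu) =>
        if hk : ny ≤ (k : ℕ) ∧ (k : ℕ) + (j+1) < ny + nu then h ⟨(k : ℕ) + (j+1), hk.2⟩ else 0) := by
  funext k
  simp only [Matrix.vecMul, dotProduct, sarxCompanion, Matrix.of_apply, mul_add,
    Finset.sum_add_distrib]
  have h1 : ∀ i : Fin (ny + nu),
      (if hk : ny ≤ (i : ℕ) ∧ (i : ℕ) + j < ny + nu then h ⟨(i : ℕ) + j, hk.2⟩ else 0) *
        (if (i : ℕ) = 0 then h k else 0) = 0 := by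
    intro i
    by_cases hi : (i : ℕ) = 0
    · rw [dif_neg (by omega), zero_mul]
    · rw [if_neg hi, mul_zero]
  rw [Finset.sum_congr rfl (fun i _ => h1 i), Finset.sum_const_zero, zero_add]
  by_cases hk1 : (k : ℕ) + 1 < ny + nu
  · by_cases hc : (k : ℕ) + 1 ≠ ny
    · have heq : ∀ i : Fin (ny + nu), ((i : ℕ) = (k : ℕ) + 1 ∧ (k : ℕ) + 1 ≠ ny) ↔
          i = ⟨(k : ℕ) + 1, hk1⟩ := by
        intro i; simp [Fin.ext_iff, hc]
      simp only [heq, mul_ite, mul_one, mul_zero]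
      rw [Finset.sum_ite_eq' Finset.univ (⟨(k : ℕ) + 1, hk1⟩ : Fin (ny + nu))]
      simp only [Finset.mem_univ, if_true]
      by_cases hcond : ny ≤ (k : ℕ) ∧ (k : ℕ) + (j + 1) < ny + nu
      · rw [dif_pos (by constructor <;> omega), dif_pos hcond]
        congr 1; exact Fin.ext (by simp; omega)
      · rw [dif_neg (by simp; omega), dif_neg hcond]
    · push_neg at hc
      have : ∀ i : Fin (ny + nu),
          (if hk : ny ≤ (i : ℕ) ∧ (i : ℕ) + j < ny + nu then h ⟨(i : ℕ) + j, hk.2⟩ else 0) *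
          (if (i : ℕ) = (k : ℕ) + 1 ∧ (k : ℕ) + 1 ≠ ny then 1 else 0) = 0 := by
        intro i; rw [if_neg (by omega), mul_zero]
      rw [Finset.sum_congr rfl (fun i _ => this i), Finset.sum_const_zero]
      rw [dif_neg (by omega)]
  · have : ∀ i : Fin (ny + nu),
        (if hk : ny ≤ (i : ℕ) ∧ (i : ℕ) + j < ny + nu then h ⟨(i : ℕ) + j, hk.2⟩ else 0) *
        (if (i : ℕ) = (k : ℕ) + 1 ∧ (k : ℕ) + 1 ≠ ny then 1 else 0) = 0 := by
      intro i; have hi := i.isLt; rw [if_neg (by omega), mul_zero]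
    rw [Finset.sum_congr rfl (fun i _ => this i), Finset.sum_const_zero]
    rw [dif_neg (by omega)]

lemma sarx_main (ny nu : ℕ) (hny : 1 ≤ ny) (h : Fin (ny + nu) → ℝ) (j : ℕ) :
    Matrix.vecMul (sarxRowX ny nu h) ((sarxCompanion ny nu h) ^ j) =
    (fun k : Fin (ny + nu) =>
        if hk : ny ≤ (k : ℕ) ∧ (k : ℕ) + j < ny + nu then h ⟨(k : ℕ) + j, hk.2⟩ else 0) := by
  induction j with
  | zero =>
    rw [pow_zero, Matrix.vecMul_one]
    funext k
    have hk := k.isLt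
    simp only [sarxRowX]
    by_cases hle : ny ≤ (k : ℕ)
    · rw [if_pos hle, dif_pos ⟨hle, by omega⟩]
      congr 1
    · rw [if_neg hle, dif_neg (by omega)]
  | succ j ih =>
    rw [pow_succ, ← Matrix.vecMul_vecMul, ih, sarx_step ny nu hny h j]

/-- With `xᵀ = Σ_{i=n_y+1}^{n} h^i e_iᵀ` and `h^n ≠ 0`:
`xᵀ A^j = Σ_{i=1}^{n_u-j} h^{n_y+i+j} e_{n_y+i}ᵀ` for `j = 0,...,n_u`, and the rows
`xᵀ A^j`, `j = 0,...,n_u-1`, span `X2 = span{e_{n_y+1}ᵀ,...,e_nᵀ}`. -/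
theorem stmt19 (ny nu : ℕ) (hny : 1 ≤ ny) (hnu : 1 ≤ nu) (h : Fin (ny + nu) → ℝ)
    (hz : h ⟨ny + nu - 1, by omega⟩ ≠ 0) :
    (∀ j ≤ nu, Matrix.vecMul (sarxRowX ny nu h) ((sarxCompanion ny nu h) ^ j) =
      fun k : Fin (ny + nu) =>
        if hk : ny ≤ (k : ℕ) ∧ (k : ℕ) + j < ny + nu then h ⟨(k : ℕ) + j, hk.2⟩ else 0) ∧
    Submodule.span ℝ {v : Fin (ny + nu) → ℝ |
        ∃ j < nu, v = Matrix.vecMul (sarxRowX ny nu h) ((sarxCompanion ny nu h) ^ j)} =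
      Submodule.span ℝ {v : Fin (ny + nu) → ℝ |
        ∃ i : Fin (ny + nu), ny ≤ (i : ℕ) ∧ v = Pi.single i 1} := by
  refine ⟨fun j _ => sarx_main ny nu hny h j, ?_⟩
  set F : ℕ → (Fin (ny + nu) → ℝ) := fun j k =>
    if hk : ny ≤ (k : ℕ) ∧ (k : ℕ) + j < ny + nu then h ⟨(k : ℕ) + j, hk.2⟩ else 0 with hF
  have hmain : ∀ j, Matrix.vecMul (sarxRowX ny nu h) ((sarxCompanion ny nu h) ^ j) = F j :=
    fun j => sarx_main ny nu hny h j
  set S := Submodule.span ℝ {v : Fin (ny + nu) → ℝ |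
      ∃ j < nu, v = Matrix.vecMul (sarxRowX ny nu h) ((sarxCompanion ny nu h) ^ j)} with hS
  set T := Submodule.span ℝ {v : Fin (ny + nu) → ℝ |
      ∃ i : Fin (ny + nu), ny ≤ (i : ℕ) ∧ v = Pi.single i 1} with hT
  -- generators of S
  have hFS : ∀ j < nu, F j ∈ S := by
    intro j hj
    exact Submodule.subset_span ⟨j, hj, (hmain j).symm⟩
  -- S ≤ T
  have hST : S ≤ T := by
    rw [hS]
    apply Submodule.span_le.2
    rintro v ⟨j, hj, rfl⟩
    rw [hmain j]
    rw [← Finset.univ_sum_single (F j)]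
    apply Submodule.sum_mem
    intro i _
    by_cases hi : ny ≤ (i : ℕ)
    · have : Pi.single i (F j i) = (F j i) • (Pi.single i 1 : Fin (ny + nu) → ℝ) := by
        funext l
        by_cases hl : l = i <;> simp [Pi.single_apply, hl]
      rw [this]
      exact Submodule.smul_mem _ _ (Submodule.subset_span ⟨i, hi, rfl⟩)
    · have : F j i = 0 := by rw [hF]; exact dif_neg (by omega)
      rw [this, Pi.single_zero]
      exact Submodule.zero_mem _
  -- key: e_{ny+m} ∈ S for m < nu
  have key : ∀ m, ∀ hm : m < nu,
      (Pi.single (⟨ny + m, Nat.add_lt_add_left hm ny⟩ : Fin (ny + nu)) 1 : Fin (ny + nu) → ℝ) ∈ S := by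
    intro m
    induction m using Nat.strong_induction_on with
    | _ m ih =>
      intro hm
      set j := nu - 1 - m with hj
      have hjlt : j < nu := by omega
      set s : Finset (Fin (ny + nu)) :=
        Finset.univ.filter (fun i : Fin (ny + nu) => ny ≤ (i : ℕ) ∧ (i : ℕ) < ny + m) with hs
      have hg : F j - ∑ i ∈ s, (F j i) • (Pi.single i 1 : Fin (ny + nu) → ℝ) =
          (h ⟨ny + nu - 1, by omega⟩) •
            (Pi.single (⟨ny + m, Nat.add_lt_add_left hm ny⟩ : Fin (ny + nu)) 1 : Fin (ny + nu) → ℝ) := by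
        funext l
        have hl := l.isLt
        simp only [Pi.sub_apply, Finset.sum_apply, Pi.smul_apply, smul_eq_mul,
          Pi.single_apply]
        have hsum : ∑ i ∈ s, F j i * (if l = i then 1 else 0) =
            if l ∈ s then F j l else 0 := by
          simp only [mul_ite, mul_one, mul_zero]
          exact Finset.sum_ite_eq s l (fun i => F j i)
        rw [hsum]
        by_cases hmem : l ∈ s
        · have hls : ny ≤ (l : ℕ) ∧ (l : ℕ) < ny + m := by
            simpa [hs] using hmem
          rw [if_pos hmem, if_neg (by
            intro hcontra
            have : (l : ℕ) = ny + m := by rw [hcontra]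
            omega)]
          ring
        · rw [if_neg hmem]
          have hls : ¬(ny ≤ (l : ℕ) ∧ (l : ℕ) < ny + m) := by
            intro hcontra; exact hmem (by simp [hs, hcontra])
          by_cases hle : l = (⟨ny + m, Nat.add_lt_add_left hm ny⟩ : Fin (ny + nu))
          · rw [if_pos hle, mul_one]
            have hlval : (l : ℕ) = ny + m := by rw [hle]
            rw [sub_zero]
            simp only [hF]
            rw [dif_pos (show ny ≤ (l:ℕ) ∧ (l:ℕ) + j < ny + nu by constructor <;> omega)]
            congr 1
            exact Fin.ext (by simp; omega)
          · rw [if_neg hle, mul_zero, sub_zero]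
            simp only [hF]
            have hlval : (l : ℕ) ≠ ny + m := by
              intro hcontra; exact hle (Fin.ext (by simp [hcontra]))
            apply dif_neg
            omega
      have hgen : F j - ∑ i ∈ s, (F j i) • (Pi.single i 1 : Fin (ny + nu) → ℝ) ∈ S := by
        apply Submodule.sub_mem _ (hFS j hjlt)
        apply Submodule.sum_mem
        intro i hi
        have his : ny ≤ (i : ℕ) ∧ (i : ℕ) < ny + m := by simpa [hs] using hi
        apply Submodule.smul_mem
        have hieq : i = (⟨ny + ((i : ℕ) - ny),
            Nat.add_lt_add_left (by omega) ny⟩ : Fin (ny + nu)) := Fin.ext (by simp; omega)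
        rw [hieq]
        exact ih ((i : ℕ) - ny) (by omega) (by omega)
      rw [hg] at hgen
      have := Submodule.smul_mem S (h ⟨ny + nu - 1, by omega⟩)⁻¹ hgen
      rwa [smul_smul, inv_mul_cancel₀ hz, one_smul] at this
  have hTS : T ≤ S := by
    rw [hT]
    apply Submodule.span_le.2
    rintro v ⟨i, hi, rfl⟩
    have hieq : i = (⟨ny + ((i : ℕ) - ny),
        Nat.add_lt_add_left (by have := i.isLt; omega) ny⟩ : Fin (ny + nu)) :=
      Fin.ext (by simp; omega)
    rw [hieq]
    exact key ((i : ℕ) - ny) (by have := i.isLt; omega)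
  exact le_antisymm hST hTS
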